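/- Let u, v, λ be positive real numbers and set h = 1/u + 1/v, g = 1/λ + u/(v(u+v+λ)) − h, and q = 1/(uv) − (v+λ)/(v(u+v+λ)²). Define for t > 0 the function R(t) = ( h²e^{2ut} + (h(g − t) − 1/(uv))e^{ut} + g/λ + q )/( h e^{ut} + g ). Then R is strictly monotonically increasing on (0, +∞). -/

import Mathlib

open Real Set

noncomputable def rBarT (u v lam : ℝ) (t : ℝ) : ℝ :=
  let h := 1 / u + 1 / v
  let g := 1 / lam + u / (v * (u + v + lam)) - h
  let q := 1 / (u * v) - (v + lam) / (v * (u + v + lam) ^ 2)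
  (h ^ 2 * Real.exp (2 * u * t) + (h * (g - t) - 1 / (u * v)) * Real.exp (u * t)
      + g / lam + q) / (h * Real.exp (u * t) + g)

/-!
With `E = exp (u t)` and `D = h E + g`, the derivative of the quotient is `E K / D²`, where
`K' = u h (2 u h E - 1) D`. For the channel constants `u h = 1 + u / v > 1/2` and
`D ≥ h + g > 0`, so `K` increases on `[0, ∞)` from the explicit positive value
`K 0 = u (u + v)² (2 v + λ) / (v³ λ (u + v + λ)²)`.
-/

section ExpRatio

variable (u h g c s : ℝ)

noncomputable def expRatioDen (t : ℝ) : ℝ := h * exp (u * t) + g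

noncomputable def expRatioNum (t : ℝ) : ℝ :=
  h ^ 2 * exp (2 * u * t) + (h * (g - t) - c) * exp (u * t) + s

noncomputable def expRatio (t : ℝ) : ℝ := expRatioNum u h g c s t / expRatioDen u h g t

noncomputable def expRatioDerivFactor (t : ℝ) : ℝ :=
  u * h * expRatioDen u h g t ^ 2 - h * expRatioDen u h g t - u * g * h * t - u * c * g - u * h * s

theorem hasDerivAt_exp_mul_const (t : ℝ) :
    HasDerivAt (fun t => exp (u * t)) (u * exp (u * t)) t := by
  simpa [mul_comm] using ((hasDerivAt_id t).const_mul u).exp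

theorem hasDerivAt_expRatioDen (t : ℝ) :
    HasDerivAt (expRatioDen u h g) (h * (u * exp (u * t))) t :=
  ((hasDerivAt_exp_mul_const u t).const_mul h).add_const g

theorem hasDerivAt_expRatioNum (t : ℝ) :
    HasDerivAt (expRatioNum u h g c s)
      (h ^ 2 * (2 * u * exp (2 * u * t)) + (-h * exp (u * t)
        + (h * (g - t) - c) * (u * exp (u * t)))) t := by
  have hlin : HasDerivAt (fun t => h * (g - t) - c) (-h) t := by
    simpa using ((hasDerivAt_id t).const_sub g).const_mul h |>.sub_const c
  exact (((hasDerivAt_exp_mul_const (2 * u) t).const_mul _).add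
    (hlin.mul (hasDerivAt_exp_mul_const u t))).add_const s

theorem hasDerivAt_expRatio {t : ℝ} (hD : expRatioDen u h g t ≠ 0) :
    HasDerivAt (expRatio u h g c s)
      (exp (u * t) * expRatioDerivFactor u h g c s t / expRatioDen u h g t ^ 2) t := by
  refine ((hasDerivAt_expRatioNum u h g c s t).div (hasDerivAt_expRatioDen u h g t) hD).congr_deriv ?_
  have hexp : exp (2 * u * t) = exp (u * t) ^ 2 := by rw [← exp_nat_mul]; ring_nf
  simp only [expRatioDerivFactor, expRatioNum, expRatioDen, hexp]
  ring

theorem hasDerivAt_expRatioDerivFactor (t : ℝ) :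
    HasDerivAt (expRatioDerivFactor u h g c s)
      (u * h * (2 * u * h * exp (u * t) - 1) * expRatioDen u h g t) t := by
  have hD := hasDerivAt_expRatioDen u h g t
  have hlin : HasDerivAt (fun t => u * g * h * t) (u * g * h) t := by
    simpa using (hasDerivAt_id t).const_mul (u * g * h)
  refine ((((hD.pow 2).const_mul (u * h)).sub (hD.const_mul h)).sub hlin
    |>.sub_const (u * c * g) |>.sub_const (u * h * s)).congr_deriv ?_
  simp only [expRatioDen]
  push_cast
  ring

variable {u h g c s}

theorem expRatioDen_pos (hu : 0 < u) (hh : 0 < h) (hhg : 0 < h + g) {t : ℝ} (ht : 0 ≤ t) :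
    0 < expRatioDen u h g t := by
  have hE : 1 ≤ exp (u * t) := one_le_exp (mul_nonneg hu.le ht)
  unfold expRatioDen
  nlinarith

theorem expRatioDerivFactor_pos (hu : 0 < u) (hh : 0 < h) (hhg : 0 < h + g)
    (huh : 1 ≤ 2 * u * h) (hK₀ : 0 < expRatioDerivFactor u h g c s 0) {t : ℝ} (ht : 0 ≤ t) :
    0 < expRatioDerivFactor u h g c s t := by
  have hmono : StrictMonoOn (expRatioDerivFactor u h g c s) (Ici 0) := by
    refine strictMonoOn_of_deriv_pos (convex_Ici 0)
      (fun x _ => (hasDerivAt_expRatioDerivFactor u h g c s x).continuousAt.continuousWithinAt)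
      fun x hx => ?_
    rw [interior_Ici] at hx
    rw [(hasDerivAt_expRatioDerivFactor u h g c s x).deriv]
    have hE : 1 < exp (u * x) := one_lt_exp_iff.mpr (mul_pos hu hx)
    have hfactor : 0 < 2 * u * h * exp (u * x) - 1 := by nlinarith
    have := expRatioDen_pos hu hh hhg hx.le
    positivity
  rcases ht.eq_or_lt with rfl | ht
  · exact hK₀
  · exact hK₀.trans (hmono self_mem_Ici ht.le ht)

theorem strictMonoOn_expRatio (hu : 0 < u) (hh : 0 < h) (hhg : 0 < h + g)
    (huh : 1 ≤ 2 * u * h) (hK₀ : 0 < expRatioDerivFactor u h g c s 0) :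
    StrictMonoOn (expRatio u h g c s) (Ici 0) := by
  have hderiv (x : ℝ) (hx : 0 ≤ x) := hasDerivAt_expRatio u h g c s (expRatioDen_pos hu hh hhg hx).ne'
  refine strictMonoOn_of_deriv_pos (convex_Ici 0)
    (fun x hx => (hderiv x hx).continuousAt.continuousWithinAt) fun x hx => ?_
  rw [interior_Ici] at hx
  rw [(hderiv x hx.le).deriv]
  have := expRatioDen_pos hu hh hhg hx.le
  have := expRatioDerivFactor_pos hu hh hhg huh hK₀ hx.le
  positivity

end ExpRatio

theorem statement18 (u v lam : ℝ) (hu : 0 < u) (hv : 0 < v) (hlam : 0 < lam) :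
    StrictMonoOn (rBarT u v lam) (Ioi 0) := by
  set h := 1 / u + 1 / v
  set g := 1 / lam + u / (v * (u + v + lam)) - h
  set q := 1 / (u * v) - (v + lam) / (v * (u + v + lam) ^ 2)
  have hR : rBarT u v lam = expRatio u h g (1 / (u * v)) (g / lam + q) := by
    funext t
    exact congrArg (· / _) (add_assoc _ _ _)
  have hh : 0 < h := by positivity
  have hhg : 0 < h + g := by
    rw [add_sub_cancel]
    positivity
  have huh : 1 ≤ 2 * u * h := by
    have : u * h = 1 + u / v := by simp only [h]; field_simp
    nlinarith [div_pos hu hv]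
  have hK₀ : expRatioDerivFactor u h g (1 / (u * v)) (g / lam + q) 0
      = u * (u + v) ^ 2 * (2 * v + lam) / (v ^ 3 * lam * (u + v + lam) ^ 2) := by
    simp only [expRatioDerivFactor, expRatioDen, h, g, q, mul_zero, exp_zero]
    field_simp
    ring
  rw [hR]
  exact (strictMonoOn_expRatio hu hh hhg huh (by rw [hK₀]; positivity)).mono Ioi_subset_Ici_self
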